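/- With the above notation for the case 𝔤 = 𝔰𝔬(4r+2,ℂ), for every dominant tuple of integers m = (m_1,…,m_r) one has C(m) = (1/(2r+1)) · ∏_{j=1}^r ((m_j+2r−2j)(m_j+2r−2j+3))/((m_j+2r−2j+1)(m_j+2r−2j+2)); in particular C(m) = 0 if and only if m_r = 0. -/

import Mathlib

open Finset

/-- A tuple of integers is dominant if its entries are weakly decreasing and nonnegative. -/
def Dominant {r : ℕ} (m : Fin r → ℤ) : Prop :=
  (∀ j k : Fin r, j ≤ k → m k ≤ m j) ∧ ∀ j : Fin r, 0 ≤ m j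

instance {r : ℕ} (m : Fin r → ℤ) : Decidable (Dominant m) := by
  unfold Dominant; infer_instance

/-- The genus `p = (e+1) + (r-1)d + b/2`. -/
noncomputable def genusP (r : ℕ) (b d e : ℝ) : ℝ := (e + 1) + ((r : ℝ) - 1) * d + b / 2

/-- `n = r(p + b/2)`. -/
noncomputable def dimN (r : ℕ) (b d e : ℝ) : ℝ := r * (genusP r b d e + b / 2)

/-- `ρ_k = (r-k)d/2 + e/2 + b/4` (1-indexed `k`). -/
noncomputable def rho (r : ℕ) (b d e : ℝ) (k : Fin r) : ℝ :=
  ((r : ℝ) - ((k : ℕ) + 1)) * d / 2 + e / 2 + b / 4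

/-- The coefficient `A(m,k)`. -/
noncomputable def Acoef (r : ℕ) (b d e : ℝ) (m : Fin r → ℤ) (k : Fin r) : ℝ :=
  (genusP r b d e / (2 * dimN r b d e)) *
    ((2 * ((m k : ℝ) + rho r b d e k) + b / 2 + 1) *
        (2 * ((m k : ℝ) + rho r b d e k) + b / 2 + e)) /
      ((2 * ((m k : ℝ) + rho r b d e k)) * (2 * ((m k : ℝ) + rho r b d e k) + 1)) *
    ∏ j ∈ univ.erase k,
      ((((m k : ℝ) + rho r b d e k) - ((m j : ℝ) + rho r b d e j) + d / 2) *
          (((m k : ℝ) + rho r b d e k) + ((m j : ℝ) + rho r b d e j) + d / 2)) /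
        ((((m k : ℝ) + rho r b d e k) - ((m j : ℝ) + rho r b d e j)) *
          (((m k : ℝ) + rho r b d e k) + ((m j : ℝ) + rho r b d e j)))

/-- The coefficient `B(m,k)`. -/
noncomputable def Bcoef (r : ℕ) (b d e : ℝ) (m : Fin r → ℤ) (k : Fin r) : ℝ :=
  (genusP r b d e / (2 * dimN r b d e)) *
    ((2 * ((m k : ℝ) + rho r b d e k) - b / 2 - 1) *
        (2 * ((m k : ℝ) + rho r b d e k) - b / 2 - e)) /
      ((2 * ((m k : ℝ) + rho r b d e k)) * (2 * ((m k : ℝ) + rho r b d e k) - 1)) *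
    ∏ j ∈ univ.erase k,
      ((((m k : ℝ) + rho r b d e k) + ((m j : ℝ) + rho r b d e j) - d / 2) *
          (((m k : ℝ) + rho r b d e k) - ((m j : ℝ) + rho r b d e j) - d / 2)) /
        ((((m k : ℝ) + rho r b d e k) + ((m j : ℝ) + rho r b d e j)) *
          (((m k : ℝ) + rho r b d e k) - ((m j : ℝ) + rho r b d e j)))

/-- The coefficient `C(m)`. -/
noncomputable def Ccoef (r : ℕ) (b d e : ℝ) (m : Fin r → ℤ) : ℝ :=
  1 - (∑ k ∈ univ.filter (fun k : Fin r =>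
        Dominant (fun j => m j + if j = k then 1 else 0)), Acoef r b d e m k)
    - (∑ k ∈ univ.filter (fun k : Fin r =>
        Dominant (fun j => m j - if j = k then 1 else 0)), Bcoef r b d e m k)


/-!
Put `x_k = m_k + ρ_k`. For dominant `m`, `A(m,k)` (resp. `B(m,k)`) vanishes whenever `m + e_k`
(resp. `m - e_k`) is not dominant: then `m_{k-1} = m_k` (resp. `m_{k+1} = m_k`, or `k = r` and
`m_r = 0`), which kills a factor of its numerator. So the dominance conditions in `C(m)` can be
dropped, and the theorem becomes the identity `∑ a_k + ∑ b_k + c = 2r + 1`, where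
`A(m,k) = a_k/(2r+1)`, `B(m,k) = b_k/(2r+1)` and `c` is the product on the right-hand side.

That identity is the residue theorem for
`R(z) = (z+3/2)² / ((z+1)(z+1/2)) · ∏ₖ ((z+2)² - x_k²) / (z² - x_k²)`:
its residues at `x_k`, `-x_k`, `-1/2`, `-1` are `2a_k`, `2b_k`, `2c`, `-1/2`, and since numerator
and denominator are monic of the same degree, the residues add up to the difference of their
subleading coefficients, `4r + 3/2`. Algebraically, this is Lagrange interpolation of the
difference of the two monic polynomials at the poles.
-/

section

open Polynomial

theorem Lagrange.sum_mul_prod_erase_div_sub {F ι : Type*} [Field F] [DecidableEq ι]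
    (s : Finset ι) (v w : ι → F) (hv : Set.InjOn v s) :
    ∑ i ∈ s, (v i - w i) * ∏ j ∈ s.erase i, (v i - w j) / (v i - v j) =
      ∑ i ∈ s, (v i - w i) := by
  rcases s.eq_empty_or_nonempty with rfl | hs
  · simp
  set P := nodal s w - nodal s v
  have hP : P.degree < #s := by
    rw [← degree_nodal (v := w)]
    exact degree_sub_lt_left (by rw [degree_nodal, degree_nodal]) nodal_monic.ne_zero
      (by rw [nodal_monic.leadingCoeff, nodal_monic.leadingCoeff])
  have hcoeff : P.coeff (#s - 1) = ∑ i ∈ s, (v i - w i) := by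
    simp only [P, coeff_sub, nodal, prod_X_sub_C_coeff_card_pred _ _ hs.card_pos,
      sum_sub_distrib]
    ring
  rw [← hcoeff, coeff_eq_sum hv hP]
  refine sum_congr rfl fun i hi => ?_
  rw [prod_div_distrib, ← mul_div_assoc, mul_prod_erase s (fun j => v i - w j) hi]
  simp [P, eval_nodal_at_node hi, eval_nodal]

end

theorem Finset.prod_univ_erase_inl {α β M : Type*} [Fintype α] [Fintype β] [DecidableEq α]
    [DecidableEq β] [CommMonoid M] (f : α ⊕ β → M) (a : α) :
    ∏ j ∈ univ.erase (Sum.inl a), f j = (∏ j ∈ univ.erase a, f (.inl j)) * ∏ b, f (.inr b) := by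
  rw [show univ.erase (Sum.inl a) = (univ.erase a).disjSum univ by ext (_ | _) <;> simp,
    prod_disjSum]

theorem Finset.prod_univ_erase_inr {α β M : Type*} [Fintype α] [Fintype β] [DecidableEq α]
    [DecidableEq β] [CommMonoid M] (f : α ⊕ β → M) (b : β) :
    ∏ j ∈ univ.erase (Sum.inr b), f j = (∏ a, f (.inl a)) * ∏ j ∈ univ.erase b, f (.inr j) := by
  rw [show univ.erase (Sum.inr b) = univ.disjSum (univ.erase b) by ext (_ | _) <;> simp,
    prod_disjSum]

namespace CmSo

variable {ι : Type*}

noncomputable def poles (x : ι → ℝ) : (ι ⊕ ι) ⊕ Bool → ℝ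
  | .inl (.inl k) => x k
  | .inl (.inr k) => -x k
  | .inr true => -1
  | .inr false => -(1 / 2)

noncomputable def zeros (x : ι → ℝ) : (ι ⊕ ι) ⊕ Bool → ℝ
  | .inl (.inl k) => x k - 2
  | .inl (.inr k) => -x k - 2
  | .inr _ => -(3 / 2)

theorem poles_injective {x : ι → ℝ} (hx : Function.Injective x) (hx1 : ∀ k, 1 < x k) :
    Function.Injective (poles x) := by
  rintro ((a | a) | (_ | _)) ((c | c) | (_ | _)) h <;>
    simp only [poles, neg_inj, Sum.inl.injEq, Sum.inr.injEq, reduceCtorEq] at h ⊢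
  all_goals first
    | exact hx h
    | linarith [hx1 a, hx1 c]
    | linarith [hx1 a]
    | linarith [hx1 c]
    | norm_num at h

variable [Fintype ι]

noncomputable def cTerm (x : ι → ℝ) : ℝ :=
  ∏ j, (x j - 3 / 2) * (x j + 3 / 2) / ((x j - 1 / 2) * (x j + 1 / 2))

theorem cTerm_eq_zero_iff {x : ι → ℝ} (hx1 : ∀ k, 1 < x k) :
    cTerm x = 0 ↔ ∃ k, x k = 3 / 2 := by
  simp only [cTerm, prod_eq_zero_iff, mem_univ, true_and, div_eq_zero_iff, mul_eq_zero]
  refine exists_congr fun k => ?_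
  have := hx1 k
  constructor
  · rintro ((h | h) | (h | h)) <;> linarith
  · intro h; left; left; linarith

variable [DecidableEq ι]

/-- The residue at `poles x i` of `∏ j, (z - zeros x j) / ∏ j, (z - poles x j)`. -/
noncomputable def residue (x : ι → ℝ) (i : (ι ⊕ ι) ⊕ Bool) : ℝ :=
  (poles x i - zeros x i) * ∏ j ∈ univ.erase i, (poles x i - zeros x j) / (poles x i - poles x j)

noncomputable def aTerm (x : ι → ℝ) (k : ι) : ℝ :=
  (2 * x k + 3) * (2 * x k + 3) / (2 * x k * (2 * x k + 1)) *
    ∏ j ∈ univ.erase k, (x k - x j + 2) * (x k + x j + 2) / ((x k - x j) * (x k + x j))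

noncomputable def bTerm (x : ι → ℝ) (k : ι) : ℝ :=
  (2 * x k - 3) * (2 * x k - 3) / (2 * x k * (2 * x k - 1)) *
    ∏ j ∈ univ.erase k, (x k + x j - 2) * (x k - x j - 2) / ((x k + x j) * (x k - x j))

theorem residue_inl_inl (x : ι → ℝ) (hx1 : ∀ k, 1 < x k) (k : ι) :
    residue x (.inl (.inl k)) = 2 * aTerm x k := by
  have hk := hx1 k
  have h0 : x k ≠ 0 := by linarith
  have h1 : x k + 1 ≠ 0 := by linarith
  have h2 : 2 * x k + 1 ≠ 0 := by linarith
  have hscalar : (x k - (x k - 2)) * ((x k - -(3 / 2)) / (x k - -1)) *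
      ((x k - (-x k - 2)) / (x k - -x k)) * ((x k - -(3 / 2)) / (x k - -(1 / 2))) =
      2 * ((2 * x k + 3) * (2 * x k + 3) / (2 * x k * (2 * x k + 1))) := by
    simp only [sub_neg_eq_add]
    field_simp
    ring
  have hprod : ∏ j ∈ univ.erase k, (x k - x j + 2) * (x k + x j + 2) / ((x k - x j) * (x k + x j))
      = (∏ j ∈ univ.erase k, (x k - (x j - 2)) / (x k - x j)) *
        ∏ j ∈ univ.erase k, (x k - (-x j - 2)) / (x k - -x j) := by
    rw [← prod_mul_distrib]
    exact prod_congr rfl fun j _ => by rw [div_mul_div_comm]; congr 1 <;> ring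
  rw [residue, prod_univ_erase_inl, prod_univ_erase_inl, Fintype.prod_bool,
    ← mul_prod_erase univ _ (mem_univ k)]
  simp only [poles, zeros, aTerm, hprod]
  linear_combination (∏ j ∈ univ.erase k, (x k - (x j - 2)) / (x k - x j)) *
    (∏ j ∈ univ.erase k, (x k - (-x j - 2)) / (x k - -x j)) * hscalar

theorem residue_inl_inr (x : ι → ℝ) (hx1 : ∀ k, 1 < x k) (k : ι) :
    residue x (.inl (.inr k)) = 2 * bTerm x k := by
  have hk := hx1 k
  have h0 : x k ≠ 0 := by linarith
  have h1 : -x k + 1 ≠ 0 := by linarith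
  have hscalar : (-x k - (-x k - 2)) * ((-x k - (x k - 2)) / (-x k - x k)) *
      ((-x k - -(3 / 2)) / (-x k - -1)) * ((-x k - -(3 / 2)) / (-x k - -(1 / 2))) =
      2 * ((2 * x k - 3) * (2 * x k - 3) / (2 * x k * (2 * x k - 1))) := by
    simp only [sub_neg_eq_add]
    field_simp
    rw [div_eq_div_iff (by intro h; linarith) (by intro h; linarith)]
    ring
  have hprod : ∏ j ∈ univ.erase k, (x k + x j - 2) * (x k - x j - 2) / ((x k + x j) * (x k - x j))
      = (∏ j ∈ univ.erase k, (-x k - (x j - 2)) / (-x k - x j)) *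
        ∏ j ∈ univ.erase k, (-x k - (-x j - 2)) / (-x k - -x j) := by
    rw [← prod_mul_distrib]
    exact prod_congr rfl fun j _ => by rw [div_mul_div_comm]; congr 1 <;> ring
  rw [residue, prod_univ_erase_inl, prod_univ_erase_inr, Fintype.prod_bool,
    ← mul_prod_erase univ _ (mem_univ k)]
  simp only [poles, zeros, bTerm, hprod]
  linear_combination (∏ j ∈ univ.erase k, (-x k - (x j - 2)) / (-x k - x j)) *
    (∏ j ∈ univ.erase k, (-x k - (-x j - 2)) / (-x k - -x j)) * hscalar

theorem residue_inr_false (x : ι → ℝ) : residue x (.inr false) = 2 * cTerm x := by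
  have hprod : cTerm x = (∏ j, (-(1 / 2) - (x j - 2)) / (-(1 / 2) - x j)) *
      ∏ j, (-(1 / 2) - (-x j - 2)) / (-(1 / 2) - -x j) := by
    rw [cTerm, ← prod_mul_distrib]
    exact prod_congr rfl fun j _ => by
      rw [div_mul_div_comm, ← neg_div_neg_eq]; congr 1 <;> ring
  rw [residue, prod_univ_erase_inr, Fintype.prod_sum_type, hprod,
    show (univ : Finset Bool).erase false = {true} by decide, prod_singleton]
  simp only [poles, zeros]
  ring

theorem residue_inr_true (x : ι → ℝ) (hx1 : ∀ k, 1 < x k) : residue x (.inr true) = -(1 / 2) := by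
  have hprod : (∏ j, (-1 - (x j - 2)) / (-1 - x j)) * ∏ j, (-1 - (-x j - 2)) / (-1 - -x j) = 1 := by
    rw [← prod_mul_distrib]
    refine prod_eq_one fun j _ => ?_
    have h1 : -1 - x j ≠ 0 := by linarith [hx1 j]
    have h2 : -1 - -x j ≠ 0 := by linarith [hx1 j]
    rw [div_mul_div_comm, div_eq_one_iff_eq (mul_ne_zero h1 h2)]
    ring
  rw [residue, prod_univ_erase_inr, Fintype.prod_sum_type,
    show (univ : Finset Bool).erase true = {false} by decide, prod_singleton]
  simp only [poles, zeros, hprod]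
  ring

theorem sum_aTerm_add_sum_bTerm_add_cTerm {x : ι → ℝ} (hx : Function.Injective x)
    (hx1 : ∀ k, 1 < x k) :
    ∑ k, aTerm x k + ∑ k, bTerm x k + cTerm x = 2 * Fintype.card ι + 1 := by
  have h := Lagrange.sum_mul_prod_erase_div_sub univ (poles x) (zeros x)
    (poles_injective hx hx1).injOn
  change ∑ i, residue x i = _ at h
  simp only [Fintype.sum_sum_type, Fintype.sum_bool, residue_inl_inl x hx1,
    residue_inl_inr x hx1, residue_inr_true x hx1, residue_inr_false, poles, zeros,
    ← mul_sum] at h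
  norm_num at h
  linarith

end CmSo

theorem Dominant.exists_pred_eq_of_not_dominant_add {r : ℕ} {m : Fin r → ℤ} (hm : Dominant m)
    {k : Fin r} (h : ¬Dominant (fun j => m j + if j = k then 1 else 0)) :
    ∃ j : Fin r, (j : ℕ) + 1 = k ∧ m j = m k := by
  by_contra! hne
  refine h ⟨fun i i' hii' => ?_, fun i => by have := hm.2 i; dsimp only; split_ifs <;> omega⟩
  have := hm.1 i i' hii'
  dsimp only
  split_ifs with hi' hi
  · omega
  · subst hi'
    have hlt : (i : ℕ) < i' := lt_of_le_of_ne hii' (fun h => hi (Fin.ext h))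
    let p : Fin r := ⟨i' - 1, by omega⟩
    have := hm.1 i p (Fin.mk_le_mk.2 (by omega))
    have := hm.1 p i' (Fin.mk_le_mk.2 (by omega))
    have := hne p (by simp [p]; omega)
    omega
  · omega
  · omega

theorem Dominant.exists_succ_eq_or_last_eq_zero_of_not_dominant_sub {r : ℕ} {m : Fin r → ℤ}
    (hm : Dominant m) {k : Fin r} (h : ¬Dominant (fun j => m j - if j = k then 1 else 0)) :
    (∃ j : Fin r, (k : ℕ) + 1 = j ∧ m j = m k) ∨ ((k : ℕ) + 1 = r ∧ m k = 0) := by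
  by_contra! hne
  obtain ⟨hsucc, hlast⟩ := hne
  have hk_pos : 0 < m k := by
    by_cases hkr : (k : ℕ) + 1 = r
    · exact lt_of_le_of_ne (hm.2 k) (hlast hkr).symm
    · let s : Fin r := ⟨k + 1, by omega⟩
      have := hm.1 k s (Fin.mk_le_mk.2 (by omega))
      have := hsucc s rfl
      have := hm.2 s
      omega
  refine h ⟨fun i i' hii' => ?_, fun i => ?_⟩
  · have := hm.1 i i' hii'
    dsimp only
    split_ifs with hi' hi hi
    · omega
    · omega
    · subst hi
      have hlt : (i : ℕ) < i' := lt_of_le_of_ne hii' (fun h => hi' (Fin.ext h).symm)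
      let s : Fin r := ⟨i + 1, by omega⟩
      have := hm.1 i s (Fin.mk_le_mk.2 (by omega))
      have := hm.1 s i' (Fin.mk_le_mk.2 (by omega))
      have := hsucc s rfl
      omega
    · omega
  · have := hm.2 i
    dsimp only
    split_ifs with hi
    · subst hi; omega
    · omega

theorem rho_sub_rho_of_succ {r : ℕ} (b d e : ℝ) {j k : Fin r} (h : (j : ℕ) + 1 = k) :
    rho r b d e j - rho r b d e k = d / 2 := by
  have : ((k : ℕ) : ℝ) = j + 1 := by exact_mod_cast h.symm
  rw [rho, rho, this]
  ring

theorem rho_of_succ_eq {r : ℕ} (b d e : ℝ) {k : Fin r} (h : (k : ℕ) + 1 = r) :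
    rho r b d e k = e / 2 + b / 4 := by
  have : ((k : ℕ) : ℝ) + 1 = r := by exact_mod_cast h
  rw [rho, this]
  ring

theorem Acoef_eq_zero_of_not_dominant_add {r : ℕ} (b d e : ℝ) {m : Fin r → ℤ} (hm : Dominant m)
    {k : Fin r} (h : ¬Dominant (fun j => m j + if j = k then 1 else 0)) :
    Acoef r b d e m k = 0 := by
  obtain ⟨j, hjk, hmj⟩ := hm.exists_pred_eq_of_not_dominant_add h
  have hj : j ∈ univ.erase k := mem_erase.2 ⟨fun h => by rw [h] at hjk; omega, mem_univ j⟩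
  have hzero : ((m k : ℝ) + rho r b d e k) - ((m j : ℝ) + rho r b d e j) + d / 2 = 0 := by
    rw [hmj]
    linarith [rho_sub_rho_of_succ b d e hjk]
  rw [Acoef, prod_eq_zero hj (by rw [hzero, zero_mul, zero_div]), mul_zero]

theorem Bcoef_eq_zero_of_not_dominant_sub {r : ℕ} (b d e : ℝ) {m : Fin r → ℤ} (hm : Dominant m)
    {k : Fin r} (h : ¬Dominant (fun j => m j - if j = k then 1 else 0)) :
    Bcoef r b d e m k = 0 := by
  rcases hm.exists_succ_eq_or_last_eq_zero_of_not_dominant_sub h with ⟨j, hkj, hmj⟩ | ⟨hk, hmk⟩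
  · have hj : j ∈ univ.erase k := mem_erase.2 ⟨fun h => by rw [h] at hkj; omega, mem_univ j⟩
    have hzero : ((m k : ℝ) + rho r b d e k) - ((m j : ℝ) + rho r b d e j) - d / 2 = 0 := by
      rw [hmj]
      linarith [rho_sub_rho_of_succ b d e hkj]
    rw [Bcoef, prod_eq_zero hj (by rw [hzero, mul_zero, zero_div]), mul_zero]
  · have hzero : 2 * ((m k : ℝ) + rho r b d e k) - b / 2 - e = 0 := by
      rw [hmk, rho_of_succ_eq b d e hk]
      ring
    rw [Bcoef, hzero, mul_zero, mul_zero, zero_div, zero_mul]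

theorem Ccoef_eq_of_dominant {r : ℕ} (b d e : ℝ) {m : Fin r → ℤ} (hm : Dominant m) :
    Ccoef r b d e m = 1 - ∑ k, Acoef r b d e m k - ∑ k, Bcoef r b d e m k := by
  rw [Ccoef, sum_filter_of_ne fun k _ hA => ?_, sum_filter_of_ne fun k _ hB => ?_]
  · exact not_not.1 fun h => hB (Bcoef_eq_zero_of_not_dominant_sub b d e hm h)
  · exact not_not.1 fun h => hA (Acoef_eq_zero_of_not_dominant_add b d e hm h)

theorem genusP_four_four_one_div_dimN {r : ℕ} (hr : r ≠ 0) :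
    genusP r 4 4 1 / (2 * dimN r 4 4 1) = (2 * (r : ℝ) + 1)⁻¹ := by
  have hr' : (r : ℝ) ≠ 0 := Nat.cast_ne_zero.2 hr
  have hp : genusP r 4 4 1 = 4 * r := by rw [genusP]; ring
  rw [dimN, hp]
  field_simp

noncomputable def mAddRho (r : ℕ) (m : Fin r → ℤ) (k : Fin r) : ℝ := m k + rho r 4 4 1 k

theorem Acoef_four_four_one {r : ℕ} (m : Fin r → ℤ) (k : Fin r) :
    Acoef r 4 4 1 m k = (2 * (r : ℝ) + 1)⁻¹ * CmSo.aTerm (mAddRho r m) k := by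
  rw [Acoef, genusP_four_four_one_div_dimN k.pos.ne', CmSo.aTerm, mul_div_assoc]
  norm_num [mAddRho]
  ring_nf

theorem Bcoef_four_four_one {r : ℕ} (m : Fin r → ℤ) (k : Fin r) :
    Bcoef r 4 4 1 m k = (2 * (r : ℝ) + 1)⁻¹ * CmSo.bTerm (mAddRho r m) k := by
  rw [Bcoef, genusP_four_four_one_div_dimN k.pos.ne', CmSo.bTerm, mul_div_assoc]
  norm_num [mAddRho]
  ring_nf

theorem mAddRho_eq {r : ℕ} (m : Fin r → ℤ) (k : Fin r) :
    mAddRho r m k = m k + 2 * (r - ((k : ℕ) + 1)) + 3 / 2 := by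
  rw [mAddRho, rho]
  ring

theorem Dominant.three_halves_le_mAddRho {r : ℕ} {m : Fin r → ℤ} (hm : Dominant m) (k : Fin r) :
    3 / 2 ≤ mAddRho r m k := by
  have : ((k : ℕ) : ℝ) + 1 ≤ r := by exact_mod_cast k.isLt
  have : (0 : ℝ) ≤ m k := by exact_mod_cast hm.2 k
  rw [mAddRho_eq]
  linarith

theorem Dominant.mAddRho_strictAnti {r : ℕ} {m : Fin r → ℤ} (hm : Dominant m) :
    StrictAnti (mAddRho r m) := fun j k hjk => by
  have : ((j : ℕ) : ℝ) + 1 ≤ k := by exact_mod_cast hjk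
  have : (m k : ℝ) ≤ m j := by exact_mod_cast hm.1 j k hjk.le
  rw [mAddRho_eq, mAddRho_eq]
  linarith

theorem Dominant.mAddRho_eq_three_halves_iff {r : ℕ} {m : Fin r → ℤ} (hm : Dominant m)
    (k : Fin r) : mAddRho r m k = 3 / 2 ↔ (k : ℕ) + 1 = r ∧ m k = 0 := by
  have hk : ((k : ℕ) : ℝ) + 1 ≤ r := by exact_mod_cast k.isLt
  have hmk : (0 : ℝ) ≤ m k := by exact_mod_cast hm.2 k
  rw [mAddRho_eq]
  constructor
  · intro h
    constructor
    · exact_mod_cast (by linarith : ((k : ℕ) : ℝ) + 1 = r)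
    · exact_mod_cast (by linarith : (m k : ℝ) = 0)
  · rintro ⟨hkr, hmk⟩
    have : ((k : ℕ) : ℝ) + 1 = r := by exact_mod_cast hkr
    rw [hmk, this]
    push_cast
    ring

theorem Dominant.exists_mAddRho_eq_three_halves_iff {r : ℕ} {m : Fin r → ℤ} (hm : Dominant m)
    (hr : 0 < r) : (∃ k, mAddRho r m k = 3 / 2) ↔ m ⟨r - 1, by omega⟩ = 0 := by
  simp only [hm.mAddRho_eq_three_halves_iff]
  constructor
  · rintro ⟨k, hk, hmk⟩
    rwa [show (⟨r - 1, _⟩ : Fin r) = k from Fin.ext (by simp only; omega)]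
  · exact fun h => ⟨_, by simp only; omega, h⟩

theorem Cm_so_complex (r : ℕ) (hr : 1 < r) (m : Fin r → ℤ) (hm : Dominant m) :
    Ccoef r 4 4 1 m
        = (1 / (2 * (r : ℝ) + 1)) *
          ∏ j : Fin r,
            (((m j : ℝ) + 2 * (r : ℝ) - 2 * ((j : ℕ) + 1)) *
                ((m j : ℝ) + 2 * (r : ℝ) - 2 * ((j : ℕ) + 1) + 3)) /
              (((m j : ℝ) + 2 * (r : ℝ) - 2 * ((j : ℕ) + 1) + 1) *
                ((m j : ℝ) + 2 * (r : ℝ) - 2 * ((j : ℕ) + 1) + 2)) ∧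
      (Ccoef r 4 4 1 m = 0 ↔ m ⟨r - 1, by omega⟩ = 0) := by
  have hx1 k : 1 < mAddRho r m k := by linarith [hm.three_halves_le_mAddRho k]
  have hsum := CmSo.sum_aTerm_add_sum_bTerm_add_cTerm hm.mAddRho_strictAnti.injective hx1
  rw [Fintype.card_fin] at hsum
  have hC : Ccoef r 4 4 1 m = (2 * (r : ℝ) + 1)⁻¹ * CmSo.cTerm (mAddRho r m) := by
    have : 2 * (r : ℝ) + 1 ≠ 0 := by positivity
    simp only [Ccoef_eq_of_dominant 4 4 1 hm, Acoef_four_four_one, Bcoef_four_four_one, ← mul_sum]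
    field_simp
    linarith
  have hcTerm : CmSo.cTerm (mAddRho r m) = ∏ j : Fin r,
      (((m j : ℝ) + 2 * (r : ℝ) - 2 * ((j : ℕ) + 1)) *
          ((m j : ℝ) + 2 * (r : ℝ) - 2 * ((j : ℕ) + 1) + 3)) /
        (((m j : ℝ) + 2 * (r : ℝ) - 2 * ((j : ℕ) + 1) + 1) *
          ((m j : ℝ) + 2 * (r : ℝ) - 2 * ((j : ℕ) + 1) + 2)) :=
    prod_congr rfl fun j _ => by rw [mAddRho_eq]; congr 1 <;> ring
  refine ⟨by rw [hC, hcTerm, one_div], ?_⟩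
  rw [hC, mul_eq_zero_iff_left (by positivity), CmSo.cTerm_eq_zero_iff hx1,
    hm.exists_mAddRho_eq_three_halves_iff (by omega)]
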